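/- In the coverability-reduction net N', the place p_new can contain at most as many tokens as the number of occurrences of t_new in the firing sequence, and if the budget-constrained instance with ℓ(p_new) = 2, γ(t_new) = 1, and policies restricted to subsets of {t_new} admits a valid policy, then t_new never fires from the initial marking; equivalently, the decision 'does some policy of cost ≤ 1 exist' is the negation of coverability. -/

import Mathlib

structure PetriNet (P T : Type*) where
  pre : T → P → ℕ
  post : T → P → ℕ

def PetriNet.enabled {P T : Type*} (N : PetriNet P T) (M : P → ℕ) (t : T) : Prop :=
  ∀ p, N.pre t p ≤ M p

def PetriNet.fire {P T : Type*} (N : PetriNet P T) (M : P → ℕ) (t : T) : P → ℕ :=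
  fun p => M p - N.pre t p + N.post t p

/-- `N.firesTo M σ M'` : the transition sequence `σ` is enabled at marking `M`
and firing it leads to marking `M'`. -/
def PetriNet.firesTo {P T : Type*} (N : PetriNet P T) : (P → ℕ) → List T → (P → ℕ) → Prop
  | M, [], M' => M' = M
  | M, t :: σ, M' => N.enabled M t ∧ N.firesTo (N.fire M t) σ M'

/-- Parikh-validity of a policy `Pol`. -/
def ParikhValid {P T E : Type*} [DecidableEq E] (N : PetriNet P T) (lab : T → E)
    (M : P → ℕ) (ℓ : P → ℕ) (γ : E → ℕ) (Pol : Finset E) : Prop :=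
  ∀ σ M', N.firesTo M σ M' → ∀ p, 0 < M' p →
    ℓ p ≤ ∑ a ∈ Pol, γ a * (σ.map lab).count a

/-- Indicator-validity of a policy `Pol`. -/
def IndicatorValid {P T E : Type*} [DecidableEq E] (N : PetriNet P T) (lab : T → E)
    (M : P → ℕ) (ℓ : P → ℕ) (γ : E → ℕ) (Pol : Finset E) : Prop :=
  ∀ σ M', N.firesTo M σ M' → ∀ p, 0 < M' p →
    ℓ p ≤ ∑ a ∈ Pol, γ a * (if a ∈ σ.map lab then 1 else 0)

/-- The coverability-reduction net `N'`: a fresh transition `t_new` (the `none`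
transition) consumes `Mt p` tokens from every original place `p` and deposits
one token in the fresh, initially empty place `p_new` (the `none` place). -/
def coverNet {P T : Type*} (N : PetriNet P T) (Mt : P → ℕ) :
    PetriNet (Option P) (Option T) where
  pre := fun t q => match t, q with
    | some s, some p => N.pre s p
    | some _, none => 0
    | none, some p => Mt p
    | none, none => 0
  post := fun t q => match t, q with
    | some s, some p => N.post s p
    | some _, none => 0
    | none, some _ => 0
    | none, none => 1

/-- Extend a marking of `N` by an empty fresh place. -/
def ext0 {P : Type*} (M : P → ℕ) : Option P → ℕ := fun q => q.elim 0 M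

/-- The security requirement of the reduction: `ℓ(p_new) = 2`, `ℓ ≡ 0` elsewhere. -/
def coverReq {P : Type*} : Option P → ℕ := fun q => q.elim 2 (fun _ => 0)

private lemma count_eq_zero'' {α : Type*} [DecidableEq α] (a : α) (l : List α)
    (h : a ∉ l) : l.count a = 0 := List.count_eq_zero.2 h

private lemma firesTo_append' {P T : Type*} (N : PetriNet P T) :
    ∀ (σ₁ : List T) (σ₂ : List T) (M M₂ : P → ℕ),
      N.firesTo M (σ₁ ++ σ₂) M₂ ↔ ∃ M₁, N.firesTo M σ₁ M₁ ∧ N.firesTo M₁ σ₂ M₂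
  | [], σ₂, M, M₂ => by
    constructor
    · intro h; exact ⟨M, rfl, h⟩
    · rintro ⟨M₁, h1, h2⟩
      cases h1
      exact h2
  | t :: σ₁, σ₂, M, M₂ => by
    constructor
    · rintro ⟨he, hf⟩
      obtain ⟨M₁, h1, h2⟩ := (firesTo_append' N σ₁ σ₂ _ M₂).1 hf
      exact ⟨M₁, ⟨he, h1⟩, h2⟩
    · rintro ⟨M₁, ⟨he, h1⟩, h2⟩
      exact ⟨he, (firesTo_append' N σ₁ σ₂ _ M₂).2 ⟨M₁, h1, h2⟩⟩

private lemma first_split {T : Type*} [DecidableEq T] (a : T) :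
    ∀ (l : List T), a ∈ l → ∃ s t, l = s ++ a :: t ∧ a ∉ s
  | b :: l, h => by
    by_cases hb : b = a
    · exact ⟨[], l, by simp [hb], by simp⟩
    · have ha : a ∈ l := by
        rcases List.mem_cons.1 h with h' | h'
        · exact absurd h'.symm hb
        · exact h'
      obtain ⟨s, t, rfl, hs⟩ := first_split a l ha
      refine ⟨b :: s, t, by simp, ?_⟩
      intro hm
      rcases List.mem_cons.1 hm with h' | h'
      · exact hb h'.symm
      · exact hs h'

private lemma count_bound' {P T : Type*} [DecidableEq T] (N : PetriNet P T) (Mt : P → ℕ) :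
    ∀ (σ : List (Option T)) (M M₁ : Option P → ℕ),
      (coverNet N Mt).firesTo M σ M₁ → M₁ none ≤ M none + σ.count none
  | [], M, M₁, h => by cases h; simp
  | t :: σ, M, M₁, h => by
    obtain ⟨he, hf⟩ := h
    have ih := count_bound' N Mt σ _ _ hf
    cases t with
    | none =>
      have : (coverNet N Mt).fire M none none = M none + 1 := by
        simp [coverNet, PetriNet.fire]
      rw [this] at ih
      simpa [List.count_cons, Nat.add_assoc, Nat.add_comm 1] using ih
    | some s =>
      have : (coverNet N Mt).fire M (some s) none = M none := by
        simp [coverNet, PetriNet.fire]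
      rw [this] at ih
      simpa [List.count_cons] using ih

private lemma fire_some_ext0 {P T : Type*} (N : PetriNet P T) (Mt : P → ℕ)
    (M : P → ℕ) (s : T) :
    (coverNet N Mt).fire (ext0 M) (some s) = ext0 (N.fire M s) := by
  funext q
  cases q <;> simp [coverNet, ext0, PetriNet.fire]

private lemma lift' {P T : Type*} (N : PetriNet P T) (Mt : P → ℕ) :
    ∀ (σ : List T) (M M' : P → ℕ), N.firesTo M σ M' →
      (coverNet N Mt).firesTo (ext0 M) (σ.map some) (ext0 M')
  | [], M, M', h => by cases h; rfl
  | s :: σ, M, M', h => by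
    obtain ⟨he, hf⟩ := h
    refine ⟨fun q => ?_, ?_⟩
    · cases q <;> simp [coverNet, ext0, he _]
    · rw [fire_some_ext0]
      exact lift' N Mt σ _ M' hf

private lemma project' {P T : Type*} (N : PetriNet P T) (Mt : P → ℕ) :
    ∀ (σ : List (Option T)) (M : P → ℕ) (M₁ : Option P → ℕ),
      (coverNet N Mt).firesTo (ext0 M) σ M₁ → none ∉ σ →
      ∃ M', M₁ = ext0 M' ∧ N.firesTo M σ.reduceOption M'
  | [], M, M₁, h, _ => by cases h; exact ⟨M, rfl, rfl⟩
  | t :: σ, M, M₁, h, hn => by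
    obtain ⟨he, hf⟩ := h
    cases t with
    | none => exact absurd List.mem_cons_self hn
    | some s =>
      rw [fire_some_ext0] at hf
      obtain ⟨M', h1, h2⟩ := project' N Mt σ _ M₁ hf (fun h => hn (List.mem_cons_of_mem _ h))
      refine ⟨M', h1, ?_⟩
      refine ⟨fun p => ?_, h2⟩
      have := he (some p)
      simpa [coverNet, ext0] using this

/-- in the reduction net, (1) `p_new` holds at most as many
tokens as the number of occurrences of `t_new` in the fired sequence; (2) if
some policy `⊆ {t_new}` is Parikh-valid then `t_new` never fires from the
initial marking; and (3) a valid policy of cost ≤ 1 exists iff `Mt` is not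
coverable from `M₀`. -/
theorem coverNet_budget_decision {P T : Type*} [DecidableEq T]
    (N : PetriNet P T) (M₀ Mt : P → ℕ) :
    (∀ (σ : List (Option T)) (M₁ : Option P → ℕ),
        (coverNet N Mt).firesTo (ext0 M₀) σ M₁ →
        M₁ none ≤ σ.count none) ∧
    ((∃ Pol : Finset (Option T), Pol ⊆ {none} ∧
        ParikhValid (coverNet N Mt) id (ext0 M₀) coverReq (fun _ => 1) Pol) →
      ∀ (σ : List (Option T)) (M₁ : Option P → ℕ),
        (coverNet N Mt).firesTo (ext0 M₀) σ M₁ → (none : Option T) ∉ σ) ∧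
    ((∃ Pol : Finset (Option T), Pol ⊆ {none} ∧ (∑ _a ∈ Pol, (1 : ℕ)) ≤ 1 ∧
        ParikhValid (coverNet N Mt) id (ext0 M₀) coverReq (fun _ => 1) Pol) ↔
      ¬ ∃ (σ : List T) (M' : P → ℕ), N.firesTo M₀ σ M' ∧ ∀ p, Mt p ≤ M' p) := by
  have h1 : ∀ (σ : List (Option T)) (M₁ : Option P → ℕ),
      (coverNet N Mt).firesTo (ext0 M₀) σ M₁ → M₁ none ≤ σ.count none := by
    intro σ M₁ hf
    have := count_bound' N Mt σ _ _ hf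
    simpa [ext0] using this
  have h2 : (∃ Pol : Finset (Option T), Pol ⊆ {none} ∧
        ParikhValid (coverNet N Mt) id (ext0 M₀) coverReq (fun _ => 1) Pol) →
      ∀ (σ : List (Option T)) (M₁ : Option P → ℕ),
        (coverNet N Mt).firesTo (ext0 M₀) σ M₁ → (none : Option T) ∉ σ := by
    rintro ⟨Pol, hsub, hvalid⟩ σ M₁ hf hmem
    obtain ⟨σ₁, σ₂, rfl, hnone⟩ := first_split none σ hmem
    obtain ⟨M', hf1, he, _⟩ := (firesTo_append' _ σ₁ _ _ _).1 hf
    set M₂ := (coverNet N Mt).fire M' none with hM₂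
    have hf2 : (coverNet N Mt).firesTo (ext0 M₀) (σ₁ ++ [none]) M₂ :=
      (firesTo_append' _ σ₁ [none] _ _).2 ⟨M', hf1, he, rfl⟩
    have hpos : 0 < M₂ none := by
      simp [hM₂, coverNet, PetriNet.fire]
    have := hvalid (σ₁ ++ [none]) M₂ hf2 none hpos
    have h21 := le_trans this (Finset.sum_le_sum_of_subset hsub)
    rw [Finset.sum_singleton] at h21
    simp only [List.map_id, List.count_append] at h21
    rw [count_eq_zero'' none σ₁ hnone] at h21
    norm_num [coverReq, List.count_cons] at h21
  refine ⟨h1, h2, ?_⟩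
  constructor
  · rintro ⟨Pol, hsub, _, hvalid⟩ ⟨σ, M', hf, hcov⟩
    have hlift := lift' N Mt σ M₀ M' hf
    have he : (coverNet N Mt).enabled (ext0 M') none := by
      intro q
      cases q <;> simp [coverNet, ext0, hcov _]
    have hf2 : (coverNet N Mt).firesTo (ext0 M₀) (σ.map some ++ [none])
        ((coverNet N Mt).fire (ext0 M') none) :=
      (firesTo_append' _ _ [none] _ _).2 ⟨ext0 M', hlift, he, rfl⟩
    exact h2 ⟨Pol, hsub, hvalid⟩ _ _ hf2 (by simp)
  · intro hnc
    refine ⟨∅, by simp, by simp, ?_⟩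
    intro σ M₁ hf p hp
    cases p with
    | some p => simp [coverReq]
    | none =>
      exfalso
      by_cases hmem : (none : Option T) ∈ σ
      · obtain ⟨σ₁, σ₂, rfl, hnone⟩ := first_split none σ hmem
        obtain ⟨M', hf1, he, _⟩ := (firesTo_append' _ σ₁ _ _ _).1 hf
        obtain ⟨M'', rfl, hfN⟩ := project' N Mt σ₁ M₀ M' hf1 hnone
        exact hnc ⟨σ₁.reduceOption, M'', hfN, fun p => by
          simpa [coverNet, ext0] using he (some p)⟩
      · have := h1 σ M₁ hf
        rw [List.count_eq_zero.2 hmem] at this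
        omega
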